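/- arXiv:1907.08986 — 2 statements merged into one kernel-verified Lean document; each statement's English description precedes it below -/
import Mathlib

section
/- Let L be a finite-dimensional restricted Lie algebra over an algebraically closed field k of characteristic p, and suppose rad(L) := the set of p-nilpotent elements forms an ideal with L/rad(L) abelian. Then every simple restricted L-module is one-dimensional. -/
/-!
Iterating the restrictedness condition gives `ρ(x^{[p]^N}) = ρ(x)^{p^N}`, so the `p`-nilpotent
ideal `I` acts on `M` by nilpotent endomorphisms. By Engel's theorem `I` has a nonzero invariant
vector; the `I`-invariants form an `L`-submodule, hence are all of `M`, and `I` acts trivially.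
Since `[L, L] ⊆ I`, every `ρ(x)` then commutes with the action, so each of its eigenspaces is a
nonzero `L`-submodule and `ρ(x)` is a scalar. Every line is then an `L`-submodule, so `M` is a
line.
-/

open LieModule

section

variable {K L M : Type*} [Field K] [LieRing L] [AddCommGroup M] [Module K M] [LieRingModule L M]

lemma LieSubmodule.eq_top_of_mem_of_ne_zero [IsIrreducible K L M] {N : LieSubmodule K L M}
    {m : M} (hm : m ∈ N) (hm0 : m ≠ 0) : N = ⊤ :=
  (IsSimpleOrder.eq_bot_or_eq_top N).resolve_left fun h ↦ hm0 ((LieSubmodule.mem_bot m).mp (h ▸ hm))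

lemma LieModule.finrank_eq_one_of_forall_lie_eq_smul [IsIrreducible K L M]
    (h : ∀ x : L, ∃ μ : K, ∀ m : M, ⁅x, m⁆ = μ • m) : Module.finrank K M = 1 := by
  have := nontrivial_of_isIrreducible K L M
  obtain ⟨m, hm⟩ := exists_ne (0 : M)
  let line : LieSubmodule K L M :=
    { K ∙ m with
      lie_mem := fun {y v} hv ↦ by
        obtain ⟨μ, hμ⟩ := h y
        exact hμ v ▸ Submodule.smul_mem _ μ hv }
  have htop : (K ∙ m) = ⊤ := congrArg LieSubmodule.toSubmodule
    (LieSubmodule.eq_top_of_mem_of_ne_zero (N := line) (Submodule.mem_span_singleton_self m) hm)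
  rw [← finrank_top K M, ← htop, finrank_span_singleton hm]

variable [LieAlgebra K L] [LieModule K L M]

namespace LieModule

lemma toEnd_iterate_eq_pow {f : L → L} {q : ℕ}
    (hf : ∀ x, toEnd K L M (f x) = toEnd K L M x ^ q) (n : ℕ) (x : L) :
    toEnd K L M (f^[n] x) = toEnd K L M x ^ (q ^ n) := by
  induction n with
  | zero => simp
  | succ n ih => rw [Function.iterate_succ_apply', hf, ih, ← pow_mul, pow_succ]

lemma isNilpotent_toEnd_of_iterate_eq_zero {f : L → L} {q : ℕ}
    (hf : ∀ x, toEnd K L M (f x) = toEnd K L M x ^ q) {n : ℕ} {x : L} (hx : f^[n] x = 0) :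
    _root_.IsNilpotent (toEnd K L M x) :=
  ⟨q ^ n, by rw [← toEnd_iterate_eq_pow hf, hx, map_zero]⟩

def eigenspaceLieSubmodule {x : L} (hx : ∀ y : L, ∀ m : M, ⁅⁅x, y⁆, m⁆ = 0) (μ : K) :
    LieSubmodule K L M where
  carrier := {m | ⁅x, m⁆ = μ • m}
  add_mem' {a b} ha hb := by simp_all only [Set.mem_ofPred_eq, lie_add, smul_add]
  zero_mem' := by simp
  smul_mem' c m hm := by simp_all only [Set.mem_ofPred_eq, lie_smul, smul_comm c μ]
  lie_mem {y m} hm := by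
    simp_all only [Set.mem_ofPred_eq, leibniz_lie, zero_add, lie_smul]

lemma exists_lie_eq_smul_of_isIrreducible [IsAlgClosed K] [Module.Finite K M]
    [IsIrreducible K L M] {x : L} (hx : ∀ y : L, ∀ m : M, ⁅⁅x, y⁆, m⁆ = 0) :
    ∃ μ : K, ∀ m : M, ⁅x, m⁆ = μ • m := by
  have := nontrivial_of_isIrreducible K L M
  obtain ⟨μ, hμ⟩ := Module.End.exists_eigenvalue (toEnd K L M x)
  obtain ⟨v, hv⟩ := hμ.exists_hasEigenvector
  have htop := LieSubmodule.eq_top_of_mem_of_ne_zero (N := eigenspaceLieSubmodule hx μ)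
    hv.apply_eq_smul hv.2
  exact ⟨μ, fun m ↦ (htop ▸ LieSubmodule.mem_top m :)⟩

end LieModule

namespace LieIdeal

variable (M) in
def invariants (I : LieIdeal K L) : LieSubmodule K L M where
  carrier := {m | ∀ x ∈ I, ⁅x, m⁆ = 0}
  add_mem' ha hb x hx := by rw [lie_add, ha x hx, hb x hx, add_zero]
  zero_mem' x _ := lie_zero x
  smul_mem' c _ hm x hx := by rw [lie_smul, hm x hx, smul_zero]
  lie_mem {y _} hm x hx := by
    rw [leibniz_lie, hm x hx, lie_zero, add_zero, hm _ (lie_mem_left K L I x y hx)]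

lemma mem_invariants {I : LieIdeal K L} {m : M} : m ∈ I.invariants M ↔ ∀ x ∈ I, ⁅x, m⁆ = 0 :=
  Iff.rfl

lemma invariants_eq_top [Module.Finite K M] [IsIrreducible K L M] {I : LieIdeal K L}
    (hI : ∀ x ∈ I, IsNilpotent (toEnd K L M x)) : I.invariants M = ⊤ := by
  have := nontrivial_of_isIrreducible K L M
  have : LieModule.IsNilpotent I M := (isNilpotent_iff_forall' (R := K)).mpr fun x ↦ hI x x.2
  have := nontrivial_max_triv_of_isNilpotent K I M
  obtain ⟨⟨m, hm⟩, hm0⟩ := exists_ne (0 : maxTrivSubmodule K I M)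
  refine LieSubmodule.eq_top_of_mem_of_ne_zero (m := m) (fun x hx ↦ ?_) (by simpa using hm0)
  simpa using (mem_maxTrivSubmodule K I M m).mp hm ⟨x, hx⟩

lemma lie_eq_zero_of_isNilpotent_toEnd [Module.Finite K M] [IsIrreducible K L M]
    {I : LieIdeal K L} (hI : ∀ x ∈ I, IsNilpotent (toEnd K L M x)) {x : L} (hx : x ∈ I)
    (m : M) : ⁅x, m⁆ = 0 :=
  mem_invariants.mp (invariants_eq_top hI ▸ LieSubmodule.mem_top m) x hx

end LieIdeal

theorem LieModule.finrank_eq_one_of_isNilpotent_toEnd_of_lie_mem [IsAlgClosed K]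
    [Module.Finite K M] [IsIrreducible K L M] (I : LieIdeal K L)
    (hI : ∀ x ∈ I, _root_.IsNilpotent (toEnd K L M x)) (hbracket : ∀ x y : L, ⁅x, y⁆ ∈ I) :
    Module.finrank K M = 1 :=
  finrank_eq_one_of_forall_lie_eq_smul fun _ ↦ exists_lie_eq_smul_of_isIrreducible fun y ↦
    I.lie_eq_zero_of_isNilpotent_toEnd hI (hbracket _ y)

end

theorem stmt3_general {k : Type*} [Field k] [IsAlgClosed k] {p : ℕ}
    {L : Type*} [LieRing L] [LieAlgebra k L]
    (pOp : L → L)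
    (I : LieIdeal k L)
    (hI : ∀ x : L, x ∈ I ↔ ∃ N : ℕ, pOp^[N] x = 0)
    (habelian : ∀ x y : L, ⁅x, y⁆ ∈ I)
    (M : Type*) [AddCommGroup M] [Module k M] [LieRingModule L M] [LieModule k L M]
    [Module.Finite k M]
    (hrestM : ∀ x : L, LieModule.toEnd k L M (pOp x) = (LieModule.toEnd k L M x) ^ p)
    [LieModule.IsIrreducible k L M] :
    Module.finrank k M = 1 := by
  refine finrank_eq_one_of_isNilpotent_toEnd_of_lie_mem I (fun x hx ↦ ?_) habelian
  obtain ⟨N, hN⟩ := (hI x).mp hx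
  exact isNilpotent_toEnd_of_iterate_eq_zero hrestM hN

/-- let `L` be a finite-dimensional restricted Lie algebra (with
`p`-operation `pOp` compatible with `ad`) over an algebraically closed field of
characteristic `p`, and suppose the set of `p`-nilpotent elements forms a Lie
ideal `I` with `L/I` abelian (i.e. `[L,L] ⊆ I`).  Then every simple restricted
`L`-module is one-dimensional. -/
theorem stmt3 {k : Type*} [Field k] [IsAlgClosed k] {p : ℕ} [Fact p.Prime] [CharP k p]
    {L : Type*} [LieRing L] [LieAlgebra k L] [Module.Finite k L]
    (pOp : L → L)
    (hres : ∀ x : L, LieAlgebra.ad k L (pOp x) = (LieAlgebra.ad k L x) ^ p)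
    (I : LieIdeal k L)
    (hI : ∀ x : L, x ∈ I ↔ ∃ N : ℕ, pOp^[N] x = 0)
    (habelian : ∀ x y : L, ⁅x, y⁆ ∈ I)
    (M : Type*) [AddCommGroup M] [Module k M] [LieRingModule L M] [LieModule k L M]
    [Module.Finite k M]
    (hrestM : ∀ x : L, LieModule.toEnd k L M (pOp x) = (LieModule.toEnd k L M x) ^ p)
    [LieModule.IsIrreducible k L M] :
    Module.finrank k M = 1 :=
  stmt3_general pOp I hI habelian M hrestM
end

section
/- Let H be a finite-dimensional torus in a restricted Lie algebra over an algebraically closed field k of characteristic p, i.e. H is abelian with h^{[p]} in the span of {h^{[p]^j}} and [p] injective on H. Then the set Λ of restricted weights {λ ∈ H* : λ(h^{[p]}) = λ(h)^p for all h ∈ H} has exactly p^{dim H} elements. -/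
/-!
The `p`-operation is an injective `p`-semilinear map `φ` of the finite-dimensional space `H`, and
such a map has a basis of fixed vectors. For a nonzero fixed vector, take `u ≠ 0` and the first
relation `φ^[n+1] u = ∑_{i ≤ n} a_i • φ^[i] u` among its iterates: the vector
`∑_{i ≤ n} b_i • φ^[i] u` with `b_0 = a_0 z^p`, `b_{i+1} = b_i^p + a_{i+1} z^p` is fixed as soon
as `b_n = z`, an equation `∑_j a_j^(p^(n-j)) z^(p^(n-j+1)) = z` with a nonzero solution in the
algebraically closed field `k`. Fixed vectors modulo the span `U` of all fixed vectors then lift to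
fixed vectors by solving Artin–Schreier equations `t^p - t = c`, so `U = H`. On a basis of fixed
vectors a functional is a restricted weight iff its values lie in `{x | x^p = x} = 𝔽_p`.
-/

open Polynomial Finset

theorem IsAlgClosed.natCard_pow_char_eq_self (k : Type*) [Field k] [IsAlgClosed k] (p : ℕ)
    [Fact p.Prime] [CharP k p] : Nat.card {x : k // x ^ p = x} = p := by
  have hsep := galois_poly_separable (K := k) p p dvd_rfl
  have hroots := card_rootSet_eq_natDegree (K := k) hsep (by simpa using IsAlgClosed.splits _)
  rw [FiniteField.X_pow_card_sub_X_natDegree_eq k (Fact.out : p.Prime).one_lt] at hroots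
  calc Nat.card {x : k // x ^ p = x} = Nat.card ((X ^ p - X : k[X]).rootSet k) :=
        Nat.card_congr <| Equiv.subtypeEquivRight fun x => by
          simp [mem_rootSet, hsep.ne_zero, sub_eq_zero]
    _ = p := by rw [Nat.card_eq_fintype_card, hroots]

theorem IsAlgClosed.exists_pow_sub_self_eq {k : Type*} [Field k] [IsAlgClosed k] {n : ℕ}
    (hn : 2 ≤ n) (c : k) : ∃ t, t ^ n - t = c := by
  have hdeg : (X ^ n - X - C c : k[X]).natDegree = n := by
    rw [natDegree_sub_C, FiniteField.X_pow_card_sub_X_natDegree_eq k hn]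
  obtain ⟨t, ht⟩ := IsAlgClosed.exists_root (X ^ n - X - C c)
    (natDegree_pos_iff_degree_pos.mp (by omega)).ne'
  exact ⟨t, by simpa [sub_eq_zero] using ht⟩

theorem IsAlgClosed.exists_ne_zero_sum_mul_pow_eq_self {k ι : Type*} [Field k] [IsAlgClosed k]
    {s : Finset ι} {c : ι → k} {e : ι → ℕ} (he : Set.InjOn e s) (he2 : ∀ i ∈ s, 2 ≤ e i)
    (hc : ∃ i ∈ s, c i ≠ 0) : ∃ z ≠ 0, ∑ i ∈ s, c i * z ^ e i = z := by
  classical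
  obtain ⟨i₀, hi₀, hci₀⟩ := hc
  set q : k[X] := ∑ i ∈ s, C (c i) * X ^ (e i - 1) - 1
  have hcoeff : q.coeff (e i₀ - 1) = c i₀ := by
    have hne : e i₀ - 1 ≠ 0 := by have := he2 i₀ hi₀; omega
    simp only [q, coeff_sub, finsetSum_coeff, coeff_C_mul_X_pow, coeff_one, if_neg hne,
      sub_zero]
    refine (sum_eq_single_of_mem i₀ hi₀ fun j hj hji => if_neg fun h => hji ?_).trans
      (if_pos rfl)
    have := he2 i₀ hi₀; have := he2 j hj
    exact he hi₀ hj (by omega) |>.symm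
  have hdeg : q.degree ≠ 0 := by
    have := le_natDegree_of_ne_zero (hcoeff ▸ hci₀ : q.coeff (e i₀ - 1) ≠ 0)
    have := he2 i₀ hi₀
    exact (natDegree_pos_iff_degree_pos.mp (by omega)).ne'
  obtain ⟨z, hz⟩ := IsAlgClosed.exists_root q hdeg
  have hq : ∑ i ∈ s, c i * z ^ (e i - 1) = 1 := by
    simpa [q, eval_finsetSum, sub_eq_zero] using hz
  refine ⟨z, ?_, ?_⟩
  · rintro rfl
    rw [sum_eq_zero fun i hi => by rw [zero_pow (by have := he2 i hi; omega), mul_zero]] at hq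
    exact zero_ne_one hq
  · calc ∑ i ∈ s, c i * z ^ e i = (∑ i ∈ s, c i * z ^ (e i - 1)) * z := by
          rw [sum_mul]
          refine sum_congr rfl fun i hi => ?_
          rw [mul_assoc, ← pow_succ, Nat.sub_add_cancel (by have := he2 i hi; omega)]
      _ = z := by rw [hq, one_mul]

theorem IsNoetherian.exists_eq_sum_range_smul {R M : Type*} [Semiring R] [AddCommMonoid M]
    [Module R M] [IsNoetherian R M] (w : ℕ → M) :
    ∃ m, ∃ a : ℕ → R, w m = ∑ i ∈ range m, a i • w i := by
  let W : ℕ →o Submodule R M :=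
    ⟨fun m => Submodule.span R (w '' Set.Iio m),
      fun _ _ h => Submodule.span_mono (Set.image_mono (Set.Iio_subset_Iio h))⟩
  obtain ⟨m, hm⟩ := monotone_stabilizes_iff_noetherian.mpr ‹_› W
  have hw : w m ∈ W m := (hm (m + 1) m.le_succ).symm ▸
    Submodule.subset_span ⟨m, Set.mem_Iio.mpr m.lt_succ_self, rfl⟩
  obtain ⟨l, hl, hlw⟩ := (Finsupp.mem_span_image_iff_linearCombination R).mp hw
  refine ⟨m, l, ?_⟩
  rw [← hlw, Finsupp.linearCombination_apply,
    Finsupp.sum_of_support_subset l (s := range m) ?_ (fun i a => a • w i) fun i _ => zero_smul R _]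
  rwa [Finsupp.mem_supported, ← coe_range, coe_subset] at hl

section FrobeniusPartialSum

variable {k V : Type*} [CommSemiring k] {p : ℕ}

def frobeniusPartialSum (p : ℕ) (c : ℕ → k) (i : ℕ) : k :=
  ∑ j ∈ range (i + 1), c j ^ p ^ (i - j)

theorem frobeniusPartialSum_zero (c : ℕ → k) : frobeniusPartialSum p c 0 = c 0 := by
  simp [frobeniusPartialSum]

variable [ExpChar k p]

theorem frobeniusPartialSum_succ (c : ℕ → k) (i : ℕ) :
    frobeniusPartialSum p c (i + 1) = frobeniusPartialSum p c i ^ p + c (i + 1) := by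
  rw [frobeniusPartialSum, sum_range_succ, Nat.sub_self, pow_zero, pow_one, frobeniusPartialSum,
    sum_pow_char]
  congr 1
  refine sum_congr rfl fun j hj => ?_
  rw [← pow_mul, ← pow_succ, Nat.sub_add_comm (mem_range_succ_iff.mp hj)]

variable [AddCommMonoid V] [Module k V]

theorem apply_sum_frobeniusPartialSum_smul_iterate (φ : V →ₛₗ[frobenius k p] V) {u : V}
    {n : ℕ} {a : ℕ → k} {z : k} (hrel : φ^[n + 1] u = ∑ i ∈ range (n + 1), a i • φ^[i] u)
    (hz : frobeniusPartialSum p (fun j => a j * z ^ p) n = z) :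
    φ (∑ i ∈ range (n + 1), frobeniusPartialSum p (fun j => a j * z ^ p) i • φ^[i] u) =
      ∑ i ∈ range (n + 1), frobeniusPartialSum p (fun j => a j * z ^ p) i • φ^[i] u := by
  set b := frobeniusPartialSum p (fun j => a j * z ^ p)
  have hφ : ∀ i, φ (b i • φ^[i] u) = b i ^ p • φ^[i + 1] u := fun i => by
    rw [map_smulₛₗ, frobenius_def, Function.iterate_succ_apply']
  rw [map_sum, sum_congr rfl fun i _ => hφ i, sum_range_succ, hz, hrel, smul_sum,
    sum_range_succ' (fun i => b i • φ^[i] u), sum_range_succ' (fun i => z ^ p • a i • φ^[i] u)]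
  simp only [b, frobeniusPartialSum_succ, frobeniusPartialSum_zero, add_smul, smul_smul,
    sum_add_distrib, mul_comm (z ^ p)]
  abel

end FrobeniusPartialSum

section FixedSpan

open Submodule

theorem span_fixed_le_comap {R M : Type*} [Semiring R] [AddCommMonoid M] [Module R M]
    {σ : R →+* R} (φ : M →ₛₗ[σ] M) : span R {x | φ x = x} ≤ (span R {x | φ x = x}).comap φ :=
  span_le.mpr fun x (hx : φ x = x) => by
    rw [SetLike.mem_coe, mem_comap, hx]
    exact subset_span hx

variable {k V : Type*} [CommSemiring k] {p : ℕ} [ExpChar k p] [PerfectRing k p]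
  [AddCommMonoid V] [Module k V] (φ : V →ₛₗ[frobenius k p] V)

theorem exists_mem_span_fixed_apply_eq {y : V}
    (hy : y ∈ span k {x | φ x = x}) : ∃ x ∈ span k {x | φ x = x}, φ x = y := by
  induction hy using span_induction with
  | mem y hy => exact ⟨y, subset_span hy, hy⟩
  | zero => exact ⟨0, zero_mem _, map_zero φ⟩
  | add _ _ _ _ h h' =>
    obtain ⟨x, hx, rfl⟩ := h
    obtain ⟨x', hx', rfl⟩ := h'
    exact ⟨x + x', add_mem hx hx', map_add φ x x'⟩
  | smul c _ _ h =>
    obtain ⟨x, hx, rfl⟩ := h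
    refine ⟨(frobeniusEquiv k p).symm c • x, smul_mem _ _ hx, ?_⟩
    rw [map_smulₛₗ, frobenius_apply_frobeniusEquiv_symm]

theorem mem_span_fixed_of_apply_mem (hφ : Function.Injective φ) {x : V}
    (hx : φ x ∈ span k {x | φ x = x}) : x ∈ span k {x | φ x = x} := by
  obtain ⟨x', hx', hxx'⟩ := exists_mem_span_fixed_apply_eq φ hx
  exact hφ hxx' ▸ hx'

end FixedSpan

section AlgClosed

open Submodule

variable {k V : Type*} [Field k] [IsAlgClosed k] {p : ℕ} [Fact p.Prime] [CharP k p]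
  [AddCommGroup V] [Module k V]

theorem exists_ne_zero_apply_eq_self_of_injective [FiniteDimensional k V] [Nontrivial V]
    {φ : V →ₛₗ[frobenius k p] V} (hφ : Function.Injective φ) : ∃ v ≠ 0, φ v = v := by
  classical
  obtain ⟨u, hu⟩ := exists_ne (0 : V)
  have hrel : ∃ m, ∃ a : ℕ → k, φ^[m] u = ∑ i ∈ range m, a i • φ^[i] u :=
    IsNoetherian.exists_eq_sum_range_smul _
  obtain ⟨a, ha⟩ := Nat.find_spec hrel
  have hmin := fun m (hm : m < Nat.find hrel) => Nat.find_min hrel hm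
  obtain ⟨n, hn⟩ : ∃ n, Nat.find hrel = n + 1 :=
    Nat.exists_eq_succ_of_ne_zero fun h => hu (by simpa [h] using ha)
  rw [hn] at ha hmin
  obtain ⟨j, hj, haj⟩ : ∃ j ∈ range (n + 1), a j ≠ 0 := by
    by_contra! h
    rw [sum_eq_zero fun j hj => by rw [h j hj, zero_smul], ← iterate_map_zero φ (n + 1)] at ha
    exact hu (hφ.iterate _ ha)
  have hp := (Fact.out : p.Prime).two_le
  obtain ⟨z, hz0, hz⟩ := IsAlgClosed.exists_ne_zero_sum_mul_pow_eq_self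
    (s := range (n + 1)) (c := fun j => a j ^ p ^ (n - j)) (e := fun j => p ^ (n - j + 1))
    (fun i hi j hj hij => by
      have := Nat.pow_right_injective hp hij
      simp only [coe_range, Set.mem_Iio] at hi hj
      omega)
    (fun j _ => hp.trans (Nat.le_self_pow (by omega) p)) ⟨j, hj, pow_ne_zero _ haj⟩
  have hb : frobeniusPartialSum p (fun j => a j * z ^ p) n = z := by
    refine (sum_congr rfl fun j _ => ?_).trans hz
    rw [mul_pow, ← pow_mul, ← pow_succ']
  refine ⟨_, fun hv => ?_, apply_sum_frobeniusPartialSum_smul_iterate φ ha hb⟩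
  rw [sum_range_succ, hb, add_eq_zero_iff_neg_eq] at hv
  refine hmin n n.lt_succ_self
    ⟨fun i => -z⁻¹ * frobeniusPartialSum p (fun j => a j * z ^ p) i, ?_⟩
  rw [← inv_smul_smul₀ hz0 (φ^[n] u), ← hv, smul_neg, smul_sum, ← sum_neg_distrib]
  simp only [mul_smul, neg_smul]

theorem exists_mem_span_fixed_apply_sub_self_eq (φ : V →ₛₗ[frobenius k p] V) {y : V}
    (hy : y ∈ span k {x | φ x = x}) : ∃ d ∈ span k {x | φ x = x}, φ d - d = y := by
  suffices ∀ c : k, ∃ d ∈ span k {x | φ x = x}, φ d - d = c • y by simpa using this 1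
  induction hy using span_induction with
  | mem y hy =>
    intro c
    obtain ⟨t, ht⟩ := IsAlgClosed.exists_pow_sub_self_eq (Fact.out : p.Prime).two_le c
    refine ⟨t • y, smul_mem _ _ (subset_span hy), ?_⟩
    rw [map_smulₛₗ, frobenius_def, show φ y = y from hy, ← sub_smul, ht]
  | zero => exact fun _ => ⟨0, zero_mem _, by simp⟩
  | add _ _ _ _ h h' =>
    intro c
    obtain ⟨d, hd, hdy⟩ := h c
    obtain ⟨d', hd', hdy'⟩ := h' c
    refine ⟨d + d', add_mem hd hd', ?_⟩
    rw [map_add, smul_add, ← hdy, ← hdy']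
    abel
  | smul a _ _ h =>
    intro c
    obtain ⟨d, hd, hdy⟩ := h (c * a)
    exact ⟨d, hd, by rw [hdy, mul_smul]⟩

theorem span_fixed_eq_top_of_injective [FiniteDimensional k V]
    {φ : V →ₛₗ[frobenius k p] V} (hφ : Function.Injective φ) : span k {x | φ x = x} = ⊤ := by
  set U := span k {x | φ x = x}
  by_contra hU
  have : Nontrivial (V ⧸ U) := Quotient.nontrivial_iff.mpr hU
  have hφU : Function.Injective (U.mapQ U φ (span_fixed_le_comap φ)) := by
    refine (injective_iff_map_eq_zero _).mpr fun x hx => ?_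
    obtain ⟨x, rfl⟩ := U.mkQ_surjective x
    exact (Quotient.mk_eq_zero U).mpr
      (mem_span_fixed_of_apply_mem φ hφ ((Quotient.mk_eq_zero U).mp hx))
  obtain ⟨x, hx0, hx⟩ := exists_ne_zero_apply_eq_self_of_injective hφU
  obtain ⟨x, rfl⟩ := U.mkQ_surjective x
  obtain ⟨d, hd, hdx⟩ :=
    exists_mem_span_fixed_apply_sub_self_eq φ (neg_mem ((Submodule.Quotient.eq U).mp hx))
  have hfix : x + d ∈ U := subset_span (show φ (x + d) = x + d by
    rw [map_add]
    linear_combination (norm := abel) hdx)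
  exact hx0 ((Quotient.mk_eq_zero U).mpr (by simpa using sub_mem hfix hd))

end AlgClosed

open Module

theorem apply_frobenius_eq_pow_iff_of_basis {k V ι : Type*} [CommSemiring k] {p : ℕ}
    [ExpChar k p] [AddCommMonoid V] [Module k V] [Fintype ι]
    {φ : V →ₛₗ[frobenius k p] V} (B : Basis ι k V) (hB : ∀ i, φ (B i) = B i) (f : Dual k V) :
    (∀ h, f (φ h) = f h ^ p) ↔ ∀ i, f (B i) ^ p = f (B i) := by
  refine ⟨fun hf i => by rw [← hf, hB], fun hf h => ?_⟩
  conv_lhs => rw [← B.sum_repr h]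
  conv_rhs => rw [← B.sum_repr h]
  simp only [map_sum, map_smulₛₗ, hB, frobenius_def, RingHom.id_apply, smul_eq_mul,
    sum_pow_char, mul_pow, hf]

theorem natCard_restricted_dual_eq_pow_finrank {k V : Type*} [Field k] [IsAlgClosed k] {p : ℕ}
    [Fact p.Prime] [CharP k p] [AddCommGroup V] [Module k V] [FiniteDimensional k V]
    {φ : V →ₛₗ[frobenius k p] V} (hφ : Function.Injective φ) :
    Nat.card {f : Dual k V // ∀ h, f (φ h) = f h ^ p} = p ^ finrank k V := by
  have hspan := (span_fixed_eq_top_of_injective hφ).ge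
  let B := Basis.ofSpan hspan
  have hB : ∀ i, φ (B i) = B i := fun i => Basis.ofSpan_subset hspan ⟨i, rfl⟩
  have := FiniteDimensional.fintypeBasisIndex B
  let e : {f : Dual k V // ∀ h, f (φ h) = f h ^ p} ≃ (_ → {x : k // x ^ p = x}) :=
    ((B.constr k).symm.toEquiv.subtypeEquiv fun f =>
      apply_frobenius_eq_pow_iff_of_basis B hB f).trans Equiv.subtypePiEquivPi
  rw [Nat.card_congr e, Nat.card_pi, prod_const, IsAlgClosed.natCard_pow_char_eq_self,
    card_univ, ← finrank_eq_card_basis B]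

theorem stmt4_general {k : Type*} [Field k] [IsAlgClosed k] {p : ℕ} [Fact p.Prime] [CharP k p]
    {H : Type*} [LieRing H] [LieAlgebra k H] [Module.Finite k H]
    (pOp : H → H)
    (hadd : ∀ x y : H, pOp (x + y) = pOp x + pOp y)
    (hsmul : ∀ (c : k) (x : H), pOp (c • x) = c ^ p • pOp x)
    (hinj : Function.Injective pOp) :
    Nat.card {lam : Module.Dual k H // ∀ h : H, lam (pOp h) = (lam h) ^ p}
      = p ^ Module.finrank k H :=
  natCard_restricted_dual_eq_pow_finrank
    (φ := { toFun := pOp, map_add' := hadd, map_smul' := hsmul }) hinj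

/-- let `H` be a finite-dimensional torus in a restricted Lie algebra
over an algebraically closed field `k` of characteristic `p`: `H` is an abelian
restricted Lie algebra (so only its vector space structure and `p`-operation
matter), the `p`-operation `pOp` is additive and `p`-semilinear, and `pOp` is
injective.  Then the set of restricted weights
`Λ = {λ ∈ H* : λ(pOp h) = λ(h)^p for all h}` has exactly `p^(dim H)` elements. -/
theorem stmt4 {k : Type*} [Field k] [IsAlgClosed k] {p : ℕ} [Fact p.Prime] [CharP k p]
    {H : Type*} [LieRing H] [LieAlgebra k H] [IsLieAbelian H] [Module.Finite k H]
    (pOp : H → H)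
    (hadd : ∀ x y : H, pOp (x + y) = pOp x + pOp y)
    (hsmul : ∀ (c : k) (x : H), pOp (c • x) = c ^ p • pOp x)
    (hinj : Function.Injective pOp) :
    Nat.card {lam : Module.Dual k H // ∀ h : H, lam (pOp h) = (lam h) ^ p}
      = p ^ Module.finrank k H :=
  stmt4_general pOp hadd hsmul hinj
end
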